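/- arXiv:1003.3227 — 4 statements merged into one kernel-verified Lean document; each statement's English description precedes it below -/
import Mathlib

section
/- Let R = N × B, where N is a monoid with identity 1 and B is a right zero semigroup. Fix y ∈ B and let M = {(n, y) : n ∈ N}, a subsemigroup of R with identity (1, y). Then ℤR, regarded as a left ℤM-module (via left multiplication in R), is a free left ℤM-module with basis F = {(1, b) : b ∈ B}; that is, every element of ℤR can be written uniquely in the form Σ_{f ∈ F} λ_f · f with λ_f ∈ ℤM, only finitely many nonzero. -/
/-- The property `FP_n` for a left module `M` over a ring `R`: there is an exact sequence
`A_n → ⋯ → A_0 → M → 0` with each `A_i` a finitely generated free left `R`-module. -/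
def ModuleFP (R : Type*) [Ring R] (M : Type*) [AddCommGroup M] [Module R M] (n : ℕ) : Prop :=
  ∃ (k : ℕ → ℕ) (d : ∀ i : ℕ, (Fin (k (i + 1)) → R) →ₗ[R] (Fin (k i) → R))
    (ε : (Fin (k 0) → R) →ₗ[R] M),
    Function.Surjective ε ∧
    (0 < n → LinearMap.range (d 0) = LinearMap.ker ε) ∧
    ∀ i : ℕ, i + 1 < n → LinearMap.range (d (i + 1)) = LinearMap.ker (d i)

/-- `ℤ` as a left module over the monoid algebra `ℤS`, via the augmentation map
sending every element of `S` to `1`. -/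
noncomputable def augModule (S : Type*) [Monoid S] : Module (MonoidAlgebra ℤ S) ℤ :=
  Module.compHom ℤ ((MonoidAlgebra.lift ℤ ℤ S 1).toRingHom)

/-- A monoid `S` is of type left-`FP_n`. -/
def LeftFP (S : Type*) [Monoid S] (n : ℕ) : Prop :=
  letI := augModule S
  ModuleFP (MonoidAlgebra ℤ S) ℤ n

/-- A monoid `S` is of type right-`FP_n` (right `ℤS`-modules = left modules over `ℤ[Sᵐᵒᵖ]`). -/
def RightFP (S : Type*) [Monoid S] (n : ℕ) : Prop :=
  LeftFP Sᵐᵒᵖ n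

/-- A semigroup is of type left-`FP_n` if the monoid `S¹ = S ∪ {1}` is. -/
def SgLeftFP (S : Type*) [Semigroup S] (n : ℕ) : Prop :=
  LeftFP (WithOne S) n

/-- A semigroup is of type right-`FP_n` if the monoid `S¹ = S ∪ {1}` is. -/
def SgRightFP (S : Type*) [Semigroup S] (n : ℕ) : Prop :=
  RightFP (WithOne S) n

/-- A group is of type `FP_n` (for groups, left- and right-`FP_n` coincide). -/
def GroupFP (G : Type*) [Group G] (n : ℕ) : Prop :=
  LeftFP G n

/-- A left ideal of a semigroup: a nonempty subset closed under left multiplication. -/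
def IsLeftIdeal {S : Type*} [Mul S] (L : Set S) : Prop :=
  L.Nonempty ∧ ∀ s : S, ∀ l ∈ L, s * l ∈ L

/-- A right ideal of a semigroup: a nonempty subset closed under right multiplication. -/
def IsRightIdeal {S : Type*} [Mul S] (R : Set S) : Prop :=
  R.Nonempty ∧ ∀ r ∈ R, ∀ s : S, r * s ∈ R

/-- A two-sided ideal of a semigroup. -/
def IsIdeal {S : Type*} [Mul S] (I : Set S) : Prop :=
  I.Nonempty ∧ (∀ s : S, ∀ i ∈ I, s * i ∈ I) ∧ ∀ i ∈ I, ∀ s : S, i * s ∈ I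

/-- A minimal left ideal. -/
def IsMinimalLeftIdeal {S : Type*} [Mul S] (L : Set S) : Prop :=
  IsLeftIdeal L ∧ ∀ L' : Set S, IsLeftIdeal L' → L' ⊆ L → L' = L

/-- A minimal right ideal. -/
def IsMinimalRightIdeal {S : Type*} [Mul S] (R : Set S) : Prop :=
  IsRightIdeal R ∧ ∀ R' : Set S, IsRightIdeal R' → R' ⊆ R → R' = R

/-- A semigroup is simple if it has no proper two-sided ideals. -/
def IsSimpleSg (S : Type*) [Mul S] : Prop :=
  ∀ I : Set S, IsIdeal I → I = Set.univ

/-- A semigroup is completely simple if it is simple and has minimal left and right ideals. -/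
def IsCompletelySimple (S : Type*) [Mul S] : Prop :=
  IsSimpleSg S ∧ (∃ L : Set S, IsMinimalLeftIdeal L) ∧ ∃ R : Set S, IsMinimalRightIdeal R

/-- The monoid `eSe` attached to an idempotent `e` of a semigroup `S`. -/
def LocalM {S : Type*} [Semigroup S] (e : {a : S // a * a = a}) : Type _ :=
  {x : S // (e : S) * x = x ∧ x * (e : S) = x}

instance {S : Type*} [Semigroup S] (e : {a : S // a * a = a}) : Monoid (LocalM e) where
  mul x y := ⟨x.1 * y.1, by rw [← mul_assoc, x.2.1], by rw [mul_assoc, y.2.2]⟩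
  mul_assoc x y z := Subtype.ext (mul_assoc x.1 y.1 z.1)
  one := ⟨e.1, e.2, e.2⟩
  one_mul x := Subtype.ext x.2.1
  mul_one x := Subtype.ext x.2.2

/-- The maximal subgroup of a semigroup `S` at an idempotent `e`: the group of units
of the monoid `eSe`. -/
def MaxSubgroup {S : Type*} [Semigroup S] (e : {a : S // a * a = a}) : Type _ :=
  (LocalM e)ˣ

noncomputable instance {S : Type*} [Semigroup S] (e : {a : S // a * a = a}) :
    Group (MaxSubgroup e) :=
  inferInstanceAs (Group (LocalM e)ˣ)

/-- The additive embedding `ℤN → ℤ(N × B)` induced by `n ↦ (n, y)`; it identifies `ℤN`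
with the span `ℤM` of `M = {(n, y) : n ∈ N}` inside `ℤ(N × B)`. -/
noncomputable def embZM {N B : Type*} (y : B) (lb : MonoidAlgebra ℤ N) :
    MonoidAlgebra ℤ (N × B) :=
  MonoidAlgebra.mapDomain (fun n : N => (n, y)) lb

lemma keyA {N B : Type*} [Monoid N] [Semigroup B] (hB : ∀ x y : B, x * y = y) (y b : B)
    (lb : MonoidAlgebra ℤ N) :
    embZM y lb * MonoidAlgebra.single ((1 : N), b) (1 : ℤ)
      = MonoidAlgebra.mapDomain (fun n => (n, b)) lb := by
  induction lb using MonoidAlgebra.induction with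
  | zero => simp [embZM]
  | single_add n c f hn hc ih =>
    rw [embZM] at ih ⊢
    rw [MonoidAlgebra.mapDomain_add, MonoidAlgebra.mapDomain_add, add_mul, ih,
      MonoidAlgebra.mapDomain_single, MonoidAlgebra.mapDomain_single]
    congr 1
    show MonoidAlgebra.single (n, y) c * MonoidAlgebra.single ((1:N), b) 1 = _
    rw [MonoidAlgebra.single_mul_single]
    simp [hB]

lemma keyB {N B : Type*} [Monoid N] [Semigroup B] (hB : ∀ x y : B, x * y = y) (y : B)
    (lam : B →₀ MonoidAlgebra ℤ N) (n : N) (b : B) :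
    (lam.sum fun b lb => embZM y lb * MonoidAlgebra.single ((1 : N), b) (1 : ℤ)).coeff (n, b)
      = (lam b).coeff n := by
  simp only [keyA hB y]
  simp only [MonoidAlgebra.coeff_finsuppSum, MonoidAlgebra.coeff_mapDomain]
  rw [Finsupp.sum_apply]
  rw [Finsupp.sum]
  by_cases hb : b ∈ lam.support
  · rw [Finset.sum_eq_single b]
    · exact Finsupp.mapDomain_apply (fun n₁ n₂ h => by simpa using congrArg Prod.fst h) _ n
    · intro b' _ hb'
      apply Finsupp.mapDomain_notin_range
      rintro ⟨m, hm⟩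
      exact hb' (congrArg Prod.snd hm)
    · intro h; exact absurd hb h
  · rw [Finsupp.notMem_support_iff.mp hb]
    simp only [MonoidAlgebra.coeff_zero, Finsupp.coe_zero, Pi.zero_apply]
    apply Finset.sum_eq_zero
    intro b' hb'
    apply Finsupp.mapDomain_notin_range
    rintro ⟨m, hm⟩
    have hbb : b' = b := congrArg Prod.snd hm
    exact hb (hbb ▸ hb')


/-- Let `R = N × B` with `N` a monoid and `B` a right zero semigroup, fix
`y ∈ B`, and let `M = {(n, y) : n ∈ N}` (identified with `N` via `n ↦ (n, y)`).  Then `ℤR`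
is a free left `ℤM`-module with basis `F = {(1, b) : b ∈ B}`: every element of `ℤR` is
uniquely of the form `Σ_{f ∈ F} λ_f · f` with `λ_f ∈ ℤM`, i.e. the map sending a finitely
supported family `(λ_b)_{b ∈ B}` of elements of `ℤM ≅ ℤN` to `Σ_b λ_b * (1, b)` is a
bijection onto `ℤR`. -/
theorem stmt2 {N B : Type*} [Monoid N] [Semigroup B] (hB : ∀ x y : B, x * y = y) (y : B) :
    Function.Bijective (fun lam : B →₀ MonoidAlgebra ℤ N =>
      lam.sum fun b lb =>
        embZM y lb * MonoidAlgebra.single ((1 : N), b) (1 : ℤ)) := by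
  constructor
  · intro l1 l2 h
    ext b n
    have := congrArg (fun x : MonoidAlgebra ℤ (N × B) => x.coeff (n, b)) h
    simpa only [keyB hB y] using this
  · intro x
    refine ⟨((Finsupp.mapDomain Prod.swap x.coeff).curry).mapRange MonoidAlgebra.ofCoeff (by ext; simp), ?_⟩
    ext ⟨n, b⟩
    rw [keyB hB y, Finsupp.mapRange_apply, MonoidAlgebra.coeff_ofCoeff]
    erw [Finsupp.curry_apply (Finsupp.mapDomain Prod.swap x.coeff) b n]
    exact Finsupp.mapDomain_apply Prod.swap_injective x.coeff (n, b)
end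

section
/- Let S be a monoid and let T be a two-sided ideal of S such that T has a two-sided identity element e (i.e., et = te = t for all t ∈ T, so T is a monoid). Then, for every n ≥ 0, S is of type left-FP_n if and only if the monoid T is of type left-FP_n. -/
/-- A subset of a semigroup which is closed under multiplication and has a two-sided
identity element `e` is a monoid. -/
def setMonoid {S : Type*} [Semigroup S] (T : Set S)
    (hmul : ∀ a ∈ T, ∀ b ∈ T, a * b ∈ T) (e : S) (he : e ∈ T)
    (hid : ∀ t ∈ T, e * t = t ∧ t * e = t) : Monoid T where
  mul a b := ⟨a.1 * b.1, hmul _ a.2 _ b.2⟩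
  mul_assoc a b c := Subtype.ext (mul_assoc a.1 b.1 c.1)
  one := ⟨e, he⟩
  one_mul a := Subtype.ext (hid a.1 a.2).1
  mul_one a := Subtype.ext (hid a.1 a.2).2

section Transfer

variable {R R' : Type*} [Ring R] [Ring R']

/-- entrywise right multiplication by `ι 1` -/
private def rmulE (ι : R' →+ R) (k : ℕ) : (Fin k → R) →ₗ[R] (Fin k → R) where
  toFun v := fun j => v j * ι 1
  map_add' x y := by funext j; simp [add_mul]
  map_smul' c v := by funext j; simp [mul_assoc]

@[simp] private lemma rmulE_apply (ι : R' →+ R) (k : ℕ) (v : Fin k → R) (j : Fin k) :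
    rmulE ι k v j = v j * ι 1 := rfl

private noncomputable def Dmap (ι : R' →+ R) {a b : ℕ}
    (f : (Fin a → R') →ₗ[R'] (Fin b → R')) : (Fin a → R) →ₗ[R] (Fin b → R) where
  toFun v := fun j => ∑ i, v i * ι (f (fun j' => if i = j' then 1 else 0) j)
  map_add' x y := by funext j; simp [add_mul, Finset.sum_add_distrib]
  map_smul' c v := by funext j; simp [Finset.mul_sum, mul_assoc]

private lemma Dmap_apply (ι : R' →+ R) {a b : ℕ}
    (f : (Fin a → R') →ₗ[R'] (Fin b → R')) (v : Fin a → R) (j : Fin b) :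
    Dmap ι f v j = ∑ i, v i * ι (f (fun j' => if i = j' then 1 else 0) j) := rfl

variable {ι : R' →+ R} (hmul : ∀ a b : R', ι (a * b) = ι a * ι b)

private lemma master (hmul : ∀ a b : R', ι (a * b) = ι a * ι b) {a b : ℕ}
    (f : (Fin a → R') →ₗ[R'] (Fin b → R')) (u : Fin a → R') :
    Dmap ι f (ι ∘ u) = ι ∘ (f u) := by
  funext j
  rw [Function.comp_apply, LinearMap.pi_apply_eq_sum_univ f u, Finset.sum_apply, map_sum]
  rw [Dmap_apply]
  refine Finset.sum_congr rfl fun i _ => ?_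
  rw [Function.comp_apply, Pi.smul_apply, smul_eq_mul, hmul]

end Transfer

section Transfer2

variable {R R' : Type*} [Ring R] [Ring R']

private theorem transfer_mp (ι : R' →+ R)
    (hinj : Function.Injective ι)
    (hmul : ∀ a b : R', ι (a * b) = ι a * ι b)
    (hEl : ∀ y : R, ι 1 * y ∈ Set.range ι)
    (p : R →+* ℤ) (p' : R' →+* ℤ) (hp : ∀ x, p (ι x) = p' x)
    (n : ℕ)
    (h : @ModuleFP R _ ℤ _ (Module.compHom ℤ p) n) :
    @ModuleFP R' _ ℤ _ (Module.compHom ℤ p') n := by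
  letI := Module.compHom ℤ p
  letI := Module.compHom ℤ p'
  obtain ⟨k, d, ε, hs, h0, hI⟩ := h
  choose τ hτ using hEl
  have hid1 : ∀ x : R', ι 1 * ι x = ι x := fun x => by rw [← hmul, one_mul]
  have hcomp_smul : ∀ {a : ℕ} (c : R') (u : Fin a → R'),
      ι ∘ (c • u) = ι c • (ι ∘ u) := by
    intro a c u; funext j
    simp only [Function.comp_apply, Pi.smul_apply, smul_eq_mul, hmul]
  have hcomp_one : ∀ {a : ℕ} (u : Fin a → R'), ι ∘ u = (ι 1 : R) • (ι ∘ u) := by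
    intro a u; funext j
    simp only [Function.comp_apply, Pi.smul_apply, smul_eq_mul, hid1]
  have hτι : ∀ x : R', τ (ι x) = x := by
    intro x; apply hinj; rw [hτ, hid1]
  have hinjc : ∀ {a : ℕ} (x y : Fin a → R'), ⇑ι ∘ x = ⇑ι ∘ y → x = y :=
    fun x y hxy => funext fun j => hinj (congrFun hxy j)
  -- the transported differentials
  have key0 : ∀ i (u : Fin (k (i + 1)) → R') (j : Fin (k i)),
      ι 1 * (d i (ι ∘ u)) j = (d i (ι ∘ u)) j := by
    intro i u j
    conv_rhs => rw [hcomp_one u, map_smul]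
    simp [Pi.smul_apply]
  let d' : ∀ i : ℕ, (Fin (k (i + 1)) → R') →ₗ[R'] (Fin (k i) → R') := fun i =>
    { toFun := fun u j => τ ((d i (ι ∘ u)) j)
      map_add' := by
        intro x y; funext j; apply hinj
        have hxy : ι ∘ (x + y) = ι ∘ x + ι ∘ y := funext fun a => map_add ι _ _
        simp only [hτ, Pi.add_apply, map_add, hxy, mul_add]
      map_smul' := by
        intro c u; funext j; apply hinj
        simp only [RingHom.id_apply, Pi.smul_apply, smul_eq_mul, hmul, hτ]
        rw [hcomp_smul c u, map_smul]
        simp only [Pi.smul_apply, smul_eq_mul]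
        rw [← mul_assoc, hid1, ← mul_assoc, ← hmul, mul_one] }
  have key : ∀ i (u : Fin (k (i + 1)) → R'), ι ∘ (d' i u) = d i (ι ∘ u) := by
    intro i u; funext j
    show ι (τ _) = _
    rw [hτ, key0]
  let ε' : (Fin (k 0) → R') →ₗ[R'] ℤ :=
    { toFun := fun u => ε (ι ∘ u)
      map_add' := by
        intro x y
        have hxy : ι ∘ (x + y) = ι ∘ x + ι ∘ y := funext fun a => map_add ι _ _
        show ε (ι ∘ (x + y)) = ε (ι ∘ x) + ε (ι ∘ y)
        rw [hxy, map_add]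
      map_smul' := by
        intro c u
        show ε (ι ∘ (c • u)) = p' c * ε (ι ∘ u)
        rw [hcomp_smul c u, map_smul]
        show p (ι c) * _ = _
        rw [hp] }
  refine ⟨k, d', ε', ?_, ?_, ?_⟩
  · intro m
    obtain ⟨v, hv⟩ := hs m
    refine ⟨fun j => τ (v j), ?_⟩
    show ε (ι ∘ fun j => τ (v j)) = m
    have : (ι ∘ fun j => τ (v j)) = (ι 1 : R) • v := funext fun a => by
      simp only [Function.comp_apply, hτ, Pi.smul_apply, smul_eq_mul]
    rw [this, map_smul]
    show p (ι 1) * ε v = m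
    rw [hp, map_one, one_mul, hv]
  · intro hn
    have hex := h0 hn
    ext u
    simp only [LinearMap.mem_range, LinearMap.mem_ker]
    constructor
    · rintro ⟨w, rfl⟩
      show ε (ι ∘ (d' 0 w)) = 0
      rw [key 0 w]
      have : d 0 (ι ∘ w) ∈ LinearMap.ker ε := hex ▸ LinearMap.mem_range_self _ _
      exact this
    · intro hu
      have h2 : (⇑ι ∘ u : Fin (k 0) → R) ∈ LinearMap.ker ε := by
        show ε (⇑ι ∘ u) = 0
        exact hu
      rw [← hex] at h2
      obtain ⟨w, hw⟩ := h2
      refine ⟨fun j => τ (w j), hinjc _ _ ?_⟩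
      rw [key 0]
      have hw1 : (⇑ι ∘ fun j => τ (w j)) = (ι 1 : R) • w := funext fun a => by
        simp only [Function.comp_apply, hτ, Pi.smul_apply, smul_eq_mul]
      rw [hw1, map_smul, hw]
      exact (hcomp_one u).symm
  · intro i hin
    have hex := hI i hin
    ext u
    simp only [LinearMap.mem_range, LinearMap.mem_ker]
    constructor
    · rintro ⟨w, rfl⟩
      apply hinjc _ _
      rw [key i, key (i + 1)]
      have : d (i + 1) (⇑ι ∘ w) ∈ LinearMap.ker (d i) := hex ▸ LinearMap.mem_range_self _ _
      rw [this]
      exact (funext fun a => map_zero ι).symm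
    · intro hu
      have h2 : (⇑ι ∘ u : Fin (k (i + 1)) → R) ∈ LinearMap.ker (d i) := by
        show d i (⇑ι ∘ u) = 0
        rw [← key i, hu]
        exact funext fun a => map_zero ι
      rw [← hex] at h2
      obtain ⟨w, hw⟩ := h2
      refine ⟨fun j => τ (w j), hinjc _ _ ?_⟩
      rw [key (i + 1)]
      have hw1 : (⇑ι ∘ fun j => τ (w j)) = (ι 1 : R) • w := funext fun a => by
        simp only [Function.comp_apply, hτ, Pi.smul_apply, smul_eq_mul]
      rw [hw1, map_smul, hw]
      exact (hcomp_one u).symm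

end Transfer2

section Converse

variable {R R' : Type*} [Ring R] [Ring R']

private def rmulF (ι : R' →+ R) (k : ℕ) : (Fin k → R) →ₗ[R] (Fin k → R) :=
  LinearMap.id - rmulE ι k

@[simp] private lemma rmulF_apply (ι : R' →+ R) (k : ℕ) (v : Fin k → R) :
    rmulF ι k v = v - rmulE ι k v := rfl

variable {ι : R' →+ R}

private lemma rmulE_idem (hmul : ∀ a b : R', ι (a * b) = ι a * ι b) {k : ℕ} (v : Fin k → R) :
    rmulE ι k (rmulE ι k v) = rmulE ι k v := by
  funext j
  simp only [rmulE_apply, mul_assoc]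
  rw [← hmul, one_mul]

private lemma rmulE_rmulF (hmul : ∀ a b : R', ι (a * b) = ι a * ι b) {k : ℕ} (v : Fin k → R) :
    rmulE ι k (rmulF ι k v) = 0 := by
  rw [rmulF_apply, map_sub, rmulE_idem hmul, sub_self]

private lemma rmulF_rmulE (hmul : ∀ a b : R', ι (a * b) = ι a * ι b) {k : ℕ} (v : Fin k → R) :
    rmulF ι k (rmulE ι k v) = 0 := by
  rw [rmulF_apply, rmulE_idem hmul, sub_self]

private lemma rmulF_eq_zero_iff (hmul : ∀ a b : R', ι (a * b) = ι a * ι b) {k : ℕ}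
    (v : Fin k → R) : rmulF ι k v = 0 ↔ ∃ c, v = rmulE ι k c := by
  constructor
  · intro h
    refine ⟨v, ?_⟩
    have := sub_eq_zero.mp h
    exact this
  · rintro ⟨c, rfl⟩
    exact rmulF_rmulE hmul c

private lemma Dmap_rE (hmul : ∀ a b : R', ι (a * b) = ι a * ι b) {a b : ℕ}
    (f : (Fin a → R') →ₗ[R'] (Fin b → R')) (v : Fin a → R) :
    rmulE ι b (Dmap ι f v) = Dmap ι f v := by
  funext j
  simp only [rmulE_apply, Dmap_apply, Finset.sum_mul, mul_assoc]
  refine Finset.sum_congr rfl fun i _ => ?_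
  rw [← hmul, mul_one]

private lemma Dmap_of_rE (hmul : ∀ a b : R', ι (a * b) = ι a * ι b) {a b : ℕ}
    (f : (Fin a → R') →ₗ[R'] (Fin b → R')) (v : Fin a → R) :
    Dmap ι f (rmulE ι a v) = Dmap ι f v := by
  funext j
  simp only [rmulE_apply, Dmap_apply, mul_assoc]
  refine Finset.sum_congr rfl fun i _ => ?_
  rw [← hmul, one_mul]

private lemma Dmap_rF (hmul : ∀ a b : R', ι (a * b) = ι a * ι b) {a b : ℕ}
    (f : (Fin a → R') →ₗ[R'] (Fin b → R')) (v : Fin a → R) :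
    Dmap ι f (rmulF ι a v) = 0 := by
  rw [rmulF_apply, map_sub, Dmap_of_rE hmul, sub_self]

private lemma sep (hmul : ∀ a b : R', ι (a * b) = ι a * ι b) {k : ℕ} (x y : Fin k → R)
    (hx : rmulE ι k x = x) (hy : rmulE ι k y = 0) (h : x + y = 0) : x = 0 ∧ y = 0 := by
  have h2 := congrArg (rmulE ι k) h
  rw [map_add, hx, hy, add_zero, map_zero] at h2
  refine ⟨h2, ?_⟩
  rw [h2, zero_add] at h
  exact h

@[reducible] private def mLen (k : ℕ → ℕ) : ℕ → ℕ
  | 0 => k 0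
  | (i + 1) => k (i + 1) + mLen k i

private def Ei (k : ℕ → ℕ) (i : ℕ) :
    (Fin (mLen k (i + 1)) → R) ≃ₗ[R] (Fin (k (i + 1)) → R) × (Fin (mLen k i) → R) :=
  (LinearEquiv.funCongrLeft R R finSumFinEquiv).trans
    (LinearEquiv.sumArrowLequivProdArrow _ _ R R)

private noncomputable def phis (ι : R' →+ R) (k : ℕ → ℕ) :
    ∀ i : ℕ, ((Fin (mLen k i) → R) →ₗ[R] (Fin (mLen k i) → R)) ×
      ((Fin (mLen k i) → R) →ₗ[R] (Fin (mLen k i) → R))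
  | 0 => (rmulF ι (mLen k 0), rmulE ι (mLen k 0))
  | (i + 1) =>
      ((Ei k i).symm.toLinearMap ∘ₗ
          (LinearMap.prodMap (rmulF ι (k (i + 1))) (phis ι k i).2) ∘ₗ (Ei k i).toLinearMap,
       (Ei k i).symm.toLinearMap ∘ₗ
          (LinearMap.prodMap (rmulE ι (k (i + 1))) (phis ι k i).1) ∘ₗ (Ei k i).toLinearMap)

private lemma phis_zero_1 (k : ℕ → ℕ) (v : Fin (mLen k 0) → R) :
    (phis ι k 0).1 v = rmulF ι (mLen k 0) v := rfl

private lemma phis_zero_2 (k : ℕ → ℕ) (v : Fin (mLen k 0) → R) :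
    (phis ι k 0).2 v = rmulE ι (mLen k 0) v := rfl

private lemma phis_succ_1 (k : ℕ → ℕ) (i : ℕ) (v : Fin (mLen k (i + 1)) → R) :
    (phis ι k (i + 1)).1 v =
      (Ei k i).symm (rmulF ι (k (i + 1)) (Ei k i v).1, (phis ι k i).2 (Ei k i v).2) := rfl

private lemma phis_succ_2 (k : ℕ → ℕ) (i : ℕ) (v : Fin (mLen k (i + 1)) → R) :
    (phis ι k (i + 1)).2 v =
      (Ei k i).symm (rmulE ι (k (i + 1)) (Ei k i v).1, (phis ι k i).1 (Ei k i v).2) := rfl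

private lemma phis_add (k : ℕ → ℕ) (i : ℕ) (v : Fin (mLen k i) → R) :
    (phis ι k i).1 v + (phis ι k i).2 v = v := by
  induction i with
  | zero =>
      show rmulF ι (mLen k 0) v + rmulE ι (mLen k 0) v = v
      rw [rmulF_apply, sub_add_cancel]
  | succ i ih =>
      rw [phis_succ_1, phis_succ_2, ← map_add]
      have : (rmulF ι (k (i + 1)) (Ei k i v).1, (phis ι k i).2 (Ei k i v).2) +
          (rmulE ι (k (i + 1)) (Ei k i v).1, (phis ι k i).1 (Ei k i v).2) = Ei k i v := by
        rw [Prod.mk_add_mk]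
        refine Prod.ext ?_ ?_
        · show rmulF ι (k (i + 1)) (Ei k i v).1 + rmulE ι (k (i + 1)) (Ei k i v).1 = _
          rw [rmulF_apply, sub_add_cancel]
        · show (phis ι k i).2 (Ei k i v).2 + (phis ι k i).1 (Ei k i v).2 = _
          rw [add_comm, ih]
      rw [this, LinearEquiv.symm_apply_apply]

private lemma phi_psi (hmul : ∀ a b : R', ι (a * b) = ι a * ι b) (k : ℕ → ℕ) (i : ℕ)
    (v : Fin (mLen k i) → R) :
    (phis ι k i).1 ((phis ι k i).2 v) = 0 ∧ (phis ι k i).2 ((phis ι k i).1 v) = 0 := by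
  induction i with
  | zero => exact ⟨rmulF_rmulE hmul v, rmulE_rmulF hmul v⟩
  | succ i ih =>
      constructor
      · rw [phis_succ_2, phis_succ_1, LinearEquiv.apply_symm_apply]
        show (Ei k i).symm (rmulF ι (k (i+1)) (rmulE ι (k (i+1)) (Ei k i v).1),
          (phis ι k i).2 ((phis ι k i).1 (Ei k i v).2)) = 0
        rw [rmulF_rmulE hmul, (ih _).2]
        exact map_zero _
      · rw [phis_succ_1, phis_succ_2, LinearEquiv.apply_symm_apply]
        show (Ei k i).symm (rmulE ι (k (i+1)) (rmulF ι (k (i+1)) (Ei k i v).1),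
          (phis ι k i).1 ((phis ι k i).2 (Ei k i v).2)) = 0
        rw [rmulE_rmulF hmul, (ih _).1]
        exact map_zero _

private lemma psi_eq_zero_iff (hmul : ∀ a b : R', ι (a * b) = ι a * ι b) (k : ℕ → ℕ) (i : ℕ)
    (v : Fin (mLen k i) → R) :
    (phis ι k i).2 v = 0 ↔ ∃ c, v = (phis ι k i).1 c := by
  constructor
  · intro h
    refine ⟨v, ?_⟩
    conv_lhs => rw [← phis_add (ι := ι) k i v]
    rw [h, add_zero]
  · rintro ⟨c, rfl⟩
    exact (phi_psi hmul k i c).2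

end Converse

section MPR

variable {R R' : Type*} [Ring R] [Ring R']

private theorem transfer_mpr (ι : R' →+ R)
    (hinj : Function.Injective ι)
    (hmul : ∀ a b : R', ι (a * b) = ι a * ι b)
    (hEr : ∀ y : R, y * ι 1 ∈ Set.range ι)
    (p : R →+* ℤ) (p' : R' →+* ℤ) (hp : ∀ x, p (ι x) = p' x)
    (n : ℕ)
    (h : @ModuleFP R' _ ℤ _ (Module.compHom ℤ p') n) :
    @ModuleFP R _ ℤ _ (Module.compHom ℤ p) n := by
  letI := Module.compHom ℤ p
  letI := Module.compHom ℤ p'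
  obtain ⟨k, d', ε', hs, h0, hI⟩ := h
  choose τ hτ using hEr
  have hinjc : ∀ {a : ℕ} (x y : Fin a → R'), ⇑ι ∘ x = ⇑ι ∘ y → x = y :=
    fun x y hxy => funext fun j => hinj (congrFun hxy j)
  have hcompτ : ∀ {a : ℕ} (v : Fin a → R), ⇑ι ∘ (τ ∘ v) = rmulE ι a v := by
    intro a v; funext j
    simp only [Function.comp_apply, hτ, rmulE_apply]
  have hp1 : p (ι 1) = 1 := by rw [hp]; exact map_one p'
  -- the augmentation over R
  let εS : (Fin (mLen k 0) → R) →ₗ[R] ℤ :=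
    { toFun := fun v => ∑ j, p (v j) * ε' (fun j' => if j = j' then 1 else 0)
      map_add' := by
        intro x y
        simp only [Pi.add_apply, map_add, add_mul, Finset.sum_add_distrib]
      map_smul' := by
        intro c v
        show ∑ j, p ((c • v) j) * _ = p c * ∑ j, p (v j) * _
        simp only [Pi.smul_apply, smul_eq_mul, map_mul, Finset.mul_sum, mul_assoc] }
  have hεS : ∀ u : Fin (mLen k 0) → R', εS (⇑ι ∘ u) = ε' u := by
    intro u
    show ∑ j, p (ι (u j)) * ε' (fun j' => if j = j' then 1 else 0) = ε' u
    rw [LinearMap.pi_apply_eq_sum_univ ε' u]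
    refine Finset.sum_congr rfl fun j _ => ?_
    rw [hp]
    rfl
  have hεSrE : ∀ v : Fin (mLen k 0) → R, εS (rmulE ι (mLen k 0) v) = εS v := by
    intro v
    show ∑ j, p (v j * ι 1) * _ = ∑ j, p (v j) * _
    refine Finset.sum_congr rfl fun j _ => ?_
    rw [map_mul, hp1, mul_one]
  have hεSrF : ∀ v : Fin (mLen k 0) → R, εS (rmulF ι (mLen k 0) v) = 0 := by
    intro v
    rw [rmulF_apply, map_sub, hεSrE, sub_self]
  -- the differentials over R
  let Dt : ∀ i : ℕ, (Fin (mLen k (i + 1)) → R) →ₗ[R] (Fin (mLen k i) → R) := fun i =>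
    match i with
    | 0 => LinearMap.coprod (Dmap ι (d' 0)) (rmulF ι (mLen k 0)) ∘ₗ (Ei k 0).toLinearMap
    | (i + 1) =>
        (Ei k i).symm.toLinearMap ∘ₗ
          (LinearMap.prod
            (Dmap ι (d' (i + 1)) ∘ₗ LinearMap.fst R _ _ +
              rmulF ι (k (i + 1)) ∘ₗ LinearMap.fst R _ _ ∘ₗ (Ei k i).toLinearMap ∘ₗ
                LinearMap.snd R _ _)
            ((phis ι k i).2 ∘ₗ LinearMap.snd R _ _ ∘ₗ (Ei k i).toLinearMap ∘ₗ
                LinearMap.snd R _ _)) ∘ₗ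
          (Ei k (i + 1)).toLinearMap
  have hDt0 : ∀ w, Dt 0 w =
      @HAdd.hAdd (Fin (mLen k 0) → R) (Fin (mLen k 0) → R) (Fin (mLen k 0) → R) _
        (Dmap ι (d' 0) (Ei k 0 w).1) (rmulF ι (mLen k 0) (Ei k 0 w).2) := fun w => rfl
  have hDtS : ∀ i w, Dt (i + 1) w =
      (Ei k i).symm
        (Dmap ι (d' (i + 1)) (Ei k (i + 1) w).1 +
           rmulF ι (k (i + 1)) ((Ei k i (Ei k (i + 1) w).2).1),
         (phis ι k i).2 ((Ei k i (Ei k (i + 1) w).2).2)) := fun i w => rfl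
  have hDt0' : ∀ u v, Dt 0 ((Ei k 0).symm (u, v)) =
      @HAdd.hAdd (Fin (mLen k 0) → R) (Fin (mLen k 0) → R) (Fin (mLen k 0) → R) _
        (Dmap ι (d' 0) u) (rmulF ι (mLen k 0) v) := by
    intro u v
    rw [hDt0, LinearEquiv.apply_symm_apply]
  have hDtS' : ∀ i u x y, Dt (i + 1) ((Ei k (i + 1)).symm (u, (Ei k i).symm (x, y))) =
      (Ei k i).symm (Dmap ι (d' (i + 1)) u + rmulF ι (k (i + 1)) x, (phis ι k i).2 y) := by
    intro i u x y
    rw [hDtS, LinearEquiv.apply_symm_apply, LinearEquiv.apply_symm_apply]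
  have hdec1 : ∀ i (z : Fin (mLen k (i + 1)) → R), ∃ u v, z = (Ei k i).symm (u, v) := by
    intro i z
    exact ⟨(Ei k i z).1, (Ei k i z).2, by
      rw [Prod.mk.eta, LinearEquiv.symm_apply_apply]⟩
  have hdec2 : ∀ i (z : Fin (mLen k (i + 2)) → R),
      ∃ u x y, z = (Ei k (i + 1)).symm (u, (Ei k i).symm (x, y)) := by
    intro i z
    refine ⟨(Ei k (i + 1) z).1, (Ei k i (Ei k (i + 1) z).2).1,
      (Ei k i (Ei k (i + 1) z).2).2, ?_⟩
    rw [Prod.mk.eta, LinearEquiv.symm_apply_apply, Prod.mk.eta, LinearEquiv.symm_apply_apply]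
  have phis_succ_2' : ∀ i x y, (phis ι k (i + 1)).2 ((Ei k i).symm (x, y)) =
      (Ei k i).symm (rmulE ι (k (i + 1)) x, (phis ι k i).1 y) := by
    intro i x y
    rw [phis_succ_2, LinearEquiv.apply_symm_apply]
  -- the key correspondence
  have keyK : ∀ i : ℕ, LinearMap.range (d' (i + 1)) = LinearMap.ker (d' i) →
      ∀ x : Fin (k (i + 1)) → R,
        (Dmap ι (d' i) x = 0 ↔
          ∃ u x', x = Dmap ι (d' (i + 1)) u + rmulF ι (k (i + 1)) x') := by
    intro i hex x
    constructor
    · intro hx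
      have h1 : Dmap ι (d' i) (⇑ι ∘ (τ ∘ x)) = 0 := by
        rw [hcompτ, Dmap_of_rE hmul, hx]
      rw [master hmul] at h1
      have h2 : d' i (τ ∘ x) = 0 :=
        hinjc _ _ (by rw [h1]; exact (funext fun a => (map_zero ι)).symm)
      have h3 : (τ ∘ x) ∈ LinearMap.ker (d' i) := h2
      rw [← hex] at h3
      obtain ⟨w, hw⟩ := h3
      refine ⟨⇑ι ∘ w, x, ?_⟩
      rw [master hmul, hw, hcompτ, rmulF_apply]
      abel
    · rintro ⟨u, x', rfl⟩
      rw [map_add, Dmap_rF hmul]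
      have h4 : Dmap ι (d' (i + 1)) u = ⇑ι ∘ (d' (i + 1) (τ ∘ u)) := by
        rw [← master hmul, hcompτ, Dmap_of_rE hmul]
      rw [h4, master hmul]
      have h5 : d' i (d' (i + 1) (τ ∘ u)) = 0 := by
        have : d' (i + 1) (τ ∘ u) ∈ LinearMap.ker (d' i) :=
          hex ▸ LinearMap.mem_range_self _ _
        exact this
      rw [h5, add_zero]
      exact funext fun a => map_zero ι
  have hDD : ∀ i : ℕ, LinearMap.range (d' (i + 1)) = LinearMap.ker (d' i) →
      ∀ u, Dmap ι (d' i) (Dmap ι (d' (i + 1)) u) = 0 := by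
    intro i hex u
    refine (keyK i hex _).mpr ⟨u, 0, ?_⟩
    rw [map_zero, add_zero]
  have hDam : ∀ i (u : Fin (k (i + 1)) → R),
      Dmap ι (d' i) u = ⇑ι ∘ (d' i (τ ∘ u)) := by
    intro i u
    rw [← master hmul, hcompτ, Dmap_of_rE hmul]
  refine ⟨mLen k, Dt, εS, ?_, ?_, ?_⟩
  · intro m
    obtain ⟨u, hu⟩ := hs m
    exact ⟨⇑ι ∘ u, by rw [hεS]; exact hu⟩
  · intro hn
    have hex := h0 hn
    ext w
    simp only [LinearMap.mem_range, LinearMap.mem_ker]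
    constructor
    · rintro ⟨z, rfl⟩
      obtain ⟨u, v, rfl⟩ := hdec1 0 z
      rw [hDt0', map_add, hDam 0, hεS, hεSrF]
      have h5 : ε' (d' 0 (τ ∘ u)) = 0 := by
        have : d' 0 (τ ∘ u) ∈ LinearMap.ker ε' :=
          hex ▸ LinearMap.mem_range_self _ _
        exact this
      rw [h5, add_zero]
    · intro hw
      have h7 : ε' (τ ∘ w) = 0 := by
        rw [← hεS, hcompτ, hεSrE]
        exact hw
      have h8 : (τ ∘ w) ∈ LinearMap.ker ε' := h7
      rw [← hex] at h8
      obtain ⟨z, hz⟩ := h8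
      refine ⟨(Ei k 0).symm (⇑ι ∘ z, w), ?_⟩
      rw [hDt0', master hmul, hz, hcompτ, rmulF_apply]
      abel
  · intro i hin
    obtain _ | i := i
    · -- range (Dt 1) = ker (Dt 0)
      have hex := hI 0 hin
      ext w
      simp only [LinearMap.mem_range, LinearMap.mem_ker]
      constructor
      · rintro ⟨z, rfl⟩
        obtain ⟨u, x, y, rfl⟩ := hdec2 0 z
        rw [hDtS' 0, hDt0', map_add, Dmap_rF hmul, hDD 0 hex, phis_zero_2,
          rmulF_rmulE hmul]
        abel
      · intro hw
        obtain ⟨a, b, rfl⟩ := hdec1 0 w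
        rw [hDt0'] at hw
        obtain ⟨h1, h2⟩ := sep hmul _ _ (Dmap_rE hmul _ _) (rmulE_rmulF hmul _) hw
        obtain ⟨u, x', hux⟩ := (keyK 0 hex _).mp h1
        obtain ⟨c, hc⟩ := (rmulF_eq_zero_iff hmul (k := mLen k 0) _).mp h2
        refine ⟨(Ei k (0 + 1)).symm (u, (Ei k 0).symm (x', c)), ?_⟩
        rw [hDtS' 0, phis_zero_2, ← hux, ← hc]
    · -- range (Dt (i + 2)) = ker (Dt (i + 1))
      have hex := hI (i + 1) hin
      ext w
      simp only [LinearMap.mem_range, LinearMap.mem_ker]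
      constructor
      · rintro ⟨z, rfl⟩
        obtain ⟨u, x, y, rfl⟩ := hdec2 (i + 1) z
        rw [hDtS' (i + 1), phis_succ_2, hDtS' i, map_add, Dmap_rF hmul,
          hDD (i + 1) hex, rmulF_rmulE hmul, (phi_psi hmul k i _).2]
        show (Ei k i).symm ((0 : Fin (k (i + 1)) → R) + 0 + 0, 0) = 0
        rw [add_zero, add_zero]
        exact map_zero _
      · intro hw
        obtain ⟨a, x, y, rfl⟩ := hdec2 i w
        rw [hDtS' i] at hw
        have hP := (LinearEquiv.map_eq_zero_iff _).mp hw
        have hA := congrArg Prod.fst hP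
        have hB := congrArg Prod.snd hP
        simp only [Prod.fst_zero, Prod.snd_zero] at hA hB
        obtain ⟨h1, h2⟩ := sep hmul _ _ (Dmap_rE hmul _ _) (rmulE_rmulF hmul _) hA
        obtain ⟨u, b, hab⟩ := (keyK (i + 1) hex _).mp h1
        obtain ⟨c1, hc1⟩ := (rmulF_eq_zero_iff hmul (k := k (i + 1)) _).mp h2
        obtain ⟨c2, hc2⟩ := (psi_eq_zero_iff hmul k i _).mp hB
        refine ⟨(Ei k (i + 2)).symm (u, (Ei k (i + 1)).symm (b, (Ei k i).symm (c1, c2))), ?_⟩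
        rw [hDtS' (i + 1), phis_succ_2', ← hab, ← hc1, ← hc2]

end MPR

section Inst

private lemma single_mul_eq_mapDomain {S : Type*} [Monoid S] (e : S) (y : MonoidAlgebra ℤ S) :
    MonoidAlgebra.single e (1 : ℤ) * y = MonoidAlgebra.mapDomain (fun s => e * s) y := by
  induction y using MonoidAlgebra.induction with
  | zero => simp
  | single_add a b f _ _ ih =>
      rw [mul_add, MonoidAlgebra.mapDomain_add, ih]
      congr 1
      rw [MonoidAlgebra.single_mul_single, one_mul, MonoidAlgebra.mapDomain_single]

private lemma mul_single_eq_mapDomain {S : Type*} [Monoid S] (e : S) (y : MonoidAlgebra ℤ S) :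
    y * MonoidAlgebra.single e (1 : ℤ) = MonoidAlgebra.mapDomain (fun s => s * e) y := by
  induction y using MonoidAlgebra.induction with
  | zero => simp
  | single_add a b f _ _ ih =>
      rw [add_mul, MonoidAlgebra.mapDomain_add, ih]
      congr 1
      rw [MonoidAlgebra.single_mul_single, mul_one, MonoidAlgebra.mapDomain_single]

private lemma lift_mapDomain {M N : Type*} [Monoid M] [Monoid N] (f : M → N)
    (x : MonoidAlgebra ℤ M) :
    (MonoidAlgebra.lift ℤ ℤ N 1) (MonoidAlgebra.mapDomain f x) = (MonoidAlgebra.lift ℤ ℤ M 1) x := by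
  induction x using MonoidAlgebra.induction with
  | zero => simp
  | single_add a b g _ _ ih =>
      rw [MonoidAlgebra.mapDomain_add, map_add, map_add, ih]
      congr 1
      rw [MonoidAlgebra.mapDomain_single]
      rw [MonoidAlgebra.lift_single, MonoidAlgebra.lift_single]
      simp

private lemma mapDomain_comp' {M N O : Type*} (f : M → N) (g : N → O) (x : MonoidAlgebra ℤ M) :
    MonoidAlgebra.mapDomain g (MonoidAlgebra.mapDomain f x) = MonoidAlgebra.mapDomain (g ∘ f) x := by
  induction x using MonoidAlgebra.induction_linear with
  | zero => simp
  | add x y hx hy => rw [MonoidAlgebra.mapDomain_add, MonoidAlgebra.mapDomain_add,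
      MonoidAlgebra.mapDomain_add, hx, hy]
  | single m r => simp

end Inst


/-- Let `S` be a monoid and `T` a two-sided ideal of `S` possessing a
two-sided identity element `e` (so that `T` is a monoid).  Then for every `n ≥ 0`, `S` is
of type left-`FP_n` if and only if the monoid `T` is of type left-`FP_n`. -/
theorem stmt5 {S : Type*} [Monoid S] (T : Set S) (hT : IsIdeal T)
    (e : S) (he : e ∈ T) (hid : ∀ t ∈ T, e * t = t ∧ t * e = t) (n : ℕ) :
    LeftFP S n ↔
      @LeftFP T (setMonoid T (fun a _ b hb => hT.2.1 a b hb) e he hid) n := by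
  letI instT : Monoid ↥T := setMonoid T (fun a _ b hb => hT.2.1 a b hb) e he hid
  let ι : MonoidAlgebra ℤ ↥T →+ MonoidAlgebra ℤ S :=
    { toFun := MonoidAlgebra.mapDomain Subtype.val, map_zero' := MonoidAlgebra.mapDomain_zero _,
      map_add' := MonoidAlgebra.mapDomain_add _ }
  have hinj : Function.Injective ⇑ι := MonoidAlgebra.mapDomain_injective Subtype.val_injective
  have hmul : ∀ a b : MonoidAlgebra ℤ ↥T, ι (a * b) = ι a * ι b := fun a b =>
    MonoidAlgebra.mapDomain_mul (MulHom.mk (Subtype.val : ↥T → S) (fun _ _ => rfl)) a b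
  have hone : ι 1 = MonoidAlgebra.single e (1 : ℤ) := by
    show MonoidAlgebra.mapDomain Subtype.val (1 : MonoidAlgebra ℤ ↥T) = _
    rw [MonoidAlgebra.one_def, MonoidAlgebra.mapDomain_single]
    rfl
  have hEl : ∀ y : MonoidAlgebra ℤ S, ι 1 * y ∈ Set.range ⇑ι := by
    intro y
    rw [hone, single_mul_eq_mapDomain]
    refine ⟨MonoidAlgebra.mapDomain (fun s => (⟨e * s, hT.2.2 e he s⟩ : ↥T)) y, ?_⟩
    show MonoidAlgebra.mapDomain Subtype.val _ = _
    rw [mapDomain_comp']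
    rfl
  have hEr : ∀ y : MonoidAlgebra ℤ S, y * ι 1 ∈ Set.range ⇑ι := by
    intro y
    rw [hone, mul_single_eq_mapDomain]
    refine ⟨MonoidAlgebra.mapDomain (fun s => (⟨s * e, hT.2.1 s e he⟩ : ↥T)) y, ?_⟩
    show MonoidAlgebra.mapDomain Subtype.val _ = _
    rw [mapDomain_comp']
    rfl
  let p : MonoidAlgebra ℤ S →+* ℤ := (MonoidAlgebra.lift ℤ ℤ S 1).toRingHom
  let p' : MonoidAlgebra ℤ ↥T →+* ℤ := (MonoidAlgebra.lift ℤ ℤ ↥T 1).toRingHom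
  have hp : ∀ x, p (ι x) = p' x := fun x => lift_mapDomain Subtype.val x
  constructor
  · intro h
    show @ModuleFP (MonoidAlgebra ℤ ↥T) _ ℤ _ (Module.compHom ℤ p') n
    exact transfer_mp ι hinj hmul hEl p p' hp n h
  · intro h
    show @ModuleFP (MonoidAlgebra ℤ S) _ ℤ _ (Module.compHom ℤ p) n
    exact transfer_mpr ι hinj hmul hEr p p' hp n h
end

section
/- Let U be a completely simple semigroup with finitely many left ideals, let L be a minimal left ideal (an ℒ-class) of U, and set S = U ∪ {1} (U with an identity adjoined) and T = L ∪ {1} ⊆ S. Then a left ℤS-module A is finitely generated as a left ℤS-module if and only if it is finitely generated as a left ℤT-module (via the subring ℤT ⊆ ℤS). -/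
section Aux

variable {U : Type*} [Semigroup U]

lemma aux_Lset_leftIdeal {L : Set U} (hL : IsLeftIdeal L) (u : U) :
    IsLeftIdeal ((fun l => l * u) '' L) := by
  constructor
  · obtain ⟨l, hl⟩ := hL.1
    exact ⟨l * u, ⟨l, hl, rfl⟩⟩
  · rintro s _ ⟨l, hl, rfl⟩
    exact ⟨s * l, hL.2 s l hl, mul_assoc s l u⟩

lemma aux_min_smul {L : Set U} (hL : IsMinimalLeftIdeal L) (u : U) :
    IsMinimalLeftIdeal ((fun l => l * u) '' L) := by
  refine ⟨aux_Lset_leftIdeal hL.1 u, ?_⟩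
  intro L' hL' hsub
  have hK : {l | l ∈ L ∧ l * u ∈ L'} = L := by
    apply hL.2
    · constructor
      · obtain ⟨x, hx⟩ := hL'.1
        obtain ⟨l, hl, rfl⟩ := hsub hx
        exact ⟨l, hl, hx⟩
      · rintro s l ⟨hl1, hl2⟩
        exact ⟨hL.1.2 s l hl1, by rw [mul_assoc]; exact hL'.2 s _ hl2⟩
    · exact fun l hl => hl.1
  apply Set.Subset.antisymm hsub
  rintro _ ⟨l, hl, rfl⟩
  have hl' : l ∈ {l | l ∈ L ∧ l * u ∈ L'} := by rw [hK]; exact hl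
  exact hl'.2

lemma aux_mem_Lset_self (hcs : IsCompletelySimple U) {L : Set U}
    (hL : IsMinimalLeftIdeal L) (u : U) : u ∈ (fun l => l * u) '' L := by
  have hM : {x : U | ∃ L' : Set U, IsMinimalLeftIdeal L' ∧ x ∈ L'} = Set.univ := by
    apply hcs.1
    refine ⟨?_, ?_, ?_⟩
    · obtain ⟨l, hl⟩ := hL.1.1
      exact ⟨l, L, hL, hl⟩
    · rintro s _ ⟨L', hL', hx⟩
      exact ⟨L', hL', hL'.1.2 s _ hx⟩
    · rintro x ⟨L', hL', hx⟩ s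
      exact ⟨_, aux_min_smul hL' s, ⟨x, hx, rfl⟩⟩
  obtain ⟨L', hL', hu⟩ : ∃ L' : Set U, IsMinimalLeftIdeal L' ∧ u ∈ L' := by
    have : u ∈ {x : U | ∃ L' : Set U, IsMinimalLeftIdeal L' ∧ x ∈ L'} := by
      rw [hM]; trivial
    exact this
  have hsub : (fun l => l * u) '' L ⊆ L' := by
    rintro _ ⟨l, hl, rfl⟩; exact hL'.1.2 l u hu
  rw [hL'.2 _ (aux_Lset_leftIdeal hL.1 u) hsub]
  exact hu

end Aux

/-- Let `U` be a completely simple semigroup with finitely many left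
ideals, let `L` be a minimal left ideal (an ℒ-class) of `U`, and set `S = U¹ = U ∪ {1}`
and `T = L ∪ {1} ⊆ S`.  Then a left `ℤS`-module `A` is finitely generated as a left
`ℤS`-module if and only if it is finitely generated as a left `ℤT`-module (the
`ℤT`-action being obtained via the inclusion `ℤT ⊆ ℤS`). -/
theorem stmt6 {U : Type*} [Semigroup U] (hcs : IsCompletelySimple U)
    (hfin : {L : Set U | IsLeftIdeal L}.Finite)
    (L : Set U) (hL : IsMinimalLeftIdeal L)
    (T : Submonoid (WithOne U))
    (hT : (T : Set (WithOne U)) = insert 1 ((fun u : U => (u : WithOne U)) '' L))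
    (A : Type*) [AddCommGroup A] [Module (MonoidAlgebra ℤ (WithOne U)) A] :
    letI : Module (MonoidAlgebra ℤ T) A :=
      Module.compHom A (MonoidAlgebra.mapDomainRingHom ℤ T.subtype)
    (Module.Finite (MonoidAlgebra ℤ (WithOne U)) A ↔ Module.Finite (MonoidAlgebra ℤ T) A) := by
  classical
  letI : Module (MonoidAlgebra ℤ T) A :=
    Module.compHom A (MonoidAlgebra.mapDomainRingHom ℤ T.subtype)
  have hUne : Nonempty U := ⟨hL.1.1.choose⟩
  -- finitely many sets of the form L * u, with representatives
  set Lset : U → Set U := fun u => (fun l => l * u) '' L with hLsetdef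
  have hrange : (Set.range Lset).Finite :=
    hfin.subset (by rintro _ ⟨u, rfl⟩; exact aux_Lset_leftIdeal hL.1 u)
  have hrep : ∃ F : Finset U, ∀ u : U, ∃ f ∈ F, ∃ l ∈ L, l * f = u := by
    set pick : Set U → U := fun I =>
      if h : ∃ v, Lset v = I then h.choose else Classical.arbitrary U with hpickdef
    refine ⟨hrange.toFinset.image pick, fun u => ?_⟩
    have h : ∃ v, Lset v = Lset u := ⟨u, rfl⟩
    refine ⟨pick (Lset u),
      Finset.mem_image.2 ⟨Lset u, hrange.mem_toFinset.2 ⟨u, rfl⟩, rfl⟩, ?_⟩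
    have hpick : Lset (pick (Lset u)) = Lset u := by
      rw [hpickdef]; simp only [dif_pos h]; exact h.choose_spec
    have hu : u ∈ Lset (pick (Lset u)) := by
      rw [hpick]; exact aux_mem_Lset_self hcs hL u
    obtain ⟨l, hl, hlu⟩ := hu
    exact ⟨l, hl, hlu⟩
  obtain ⟨F, hF⟩ := hrep
  -- decomposition S = T ⬝ F'
  set F' : Finset (WithOne U) := insert 1 (F.image (fun u : U => (u : WithOne U)))
    with hF'def
  have hdec : ∀ s : WithOne U, ∃ t ∈ T, ∃ f ∈ F', t * f = s := by
    intro s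
    induction s using WithOne.recOneCoe with
    | one => exact ⟨1, T.one_mem, 1, Finset.mem_insert_self _ _, one_mul 1⟩
    | coe u =>
      obtain ⟨f, hf, l, hl, hlf⟩ := hF u
      refine ⟨(l : WithOne U), ?_, (f : WithOne U),
        Finset.mem_insert_of_mem (Finset.mem_image_of_mem _ hf), ?_⟩
      · show (l : WithOne U) ∈ (T : Set (WithOne U))
        rw [hT]; exact Or.inr ⟨l, hl, rfl⟩
      · rw [← WithOne.coe_mul, hlf]
  -- module theory
  set φ : MonoidAlgebra ℤ T →+* MonoidAlgebra ℤ (WithOne U) :=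
    MonoidAlgebra.mapDomainRingHom ℤ T.subtype with hφdef
  have hsmul : ∀ (c : MonoidAlgebra ℤ T) (a : A), c • a = φ c • a := fun _ _ => rfl
  have hφs : ∀ (t : T) (b : ℤ),
      φ (MonoidAlgebra.single t b) = MonoidAlgebra.single (t : WithOne U) b := by
    intro t b
    rw [hφdef]
    simp [MonoidAlgebra.mapDomainRingHom]
  constructor
  · intro hfg
    obtain ⟨G, hG⟩ := Module.finite_def.1 hfg
    set G' : Finset A :=
      (F' ×ˢ G).image (fun p => MonoidAlgebra.single p.1 (1 : ℤ) • p.2) with hG'def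
    set N : Submodule (MonoidAlgebra ℤ T) A := Submodule.span (MonoidAlgebra ℤ T) (↑G' : Set A) with hNdef
    -- single s 1 • (element of G') lands in N
    have hsingle : ∀ (s : WithOne U) (x : A),
        x ∈ (↑G' : Set A) → MonoidAlgebra.single s (1 : ℤ) • x ∈ N := by
      intro s x hx
      obtain ⟨p, hp, rfl⟩ := Finset.mem_image.1 hx
      obtain ⟨hp1, hp2⟩ := Finset.mem_product.1 hp
      have : MonoidAlgebra.single s (1 : ℤ) • MonoidAlgebra.single p.1 (1 : ℤ) • p.2
          = MonoidAlgebra.single (s * p.1) (1 : ℤ) • p.2 := by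
        rw [← mul_smul, MonoidAlgebra.single_mul_single, one_mul]
      rw [this]
      obtain ⟨t, ht, f, hf, htf⟩ := hdec (s * p.1)
      have hy : MonoidAlgebra.single f (1 : ℤ) • p.2 ∈ (↑G' : Set A) := by
        rw [hG'def]
        exact Finset.mem_coe.2 (Finset.mem_image.2
          ⟨(f, p.2), Finset.mem_product.2 ⟨hf, hp2⟩, rfl⟩)
      have key : MonoidAlgebra.single (s * p.1) (1 : ℤ) • p.2
          = MonoidAlgebra.single (⟨t, ht⟩ : T) (1 : ℤ) •
            (MonoidAlgebra.single f (1 : ℤ) • p.2) := by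
        rw [hsmul, hφs, ← mul_smul, MonoidAlgebra.single_mul_single, one_mul, htf]
      rw [key]
      exact Submodule.smul_mem N _ (Submodule.subset_span hy)
    -- any c • x for x ∈ G'
    have hcG : ∀ (c : MonoidAlgebra ℤ (WithOne U)) (x : A), x ∈ (↑G' : Set A) → c • x ∈ N := by
      intro c
      induction c using MonoidAlgebra.induction with
      | zero => intro x _; rw [zero_smul]; exact N.zero_mem
      | single_add s b c _ hb ih =>
        intro x hx
        rw [add_smul]
        refine N.add_mem ?_ (ih x hx)
        have : MonoidAlgebra.single s b • x
            = b • (MonoidAlgebra.single s (1 : ℤ) • x) := by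
          rw [← smul_assoc, MonoidAlgebra.smul_single, smul_eq_mul, mul_one]
        rw [this]
        exact N.smul_of_tower_mem b (hsingle s x hx)
    -- main induction
    have main : ∀ x : A, x ∈ Submodule.span (MonoidAlgebra ℤ (WithOne U)) (↑G : Set A) → ∀ c : MonoidAlgebra ℤ (WithOne U), c • x ∈ N := by
      intro x hx
      induction hx using Submodule.span_induction with
      | mem x hxG =>
        intro c
        have hx' : x ∈ (↑G' : Set A) := by
          rw [hG'def]
          refine Finset.mem_coe.2 (Finset.mem_image.2
            ⟨(1, x), Finset.mem_product.2 ⟨Finset.mem_insert_self _ _, hxG⟩, ?_⟩)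
          show MonoidAlgebra.single (1 : WithOne U) (1 : ℤ) • x = x
          rw [← MonoidAlgebra.one_def, one_smul]
        exact hcG c x hx'
      | zero => intro c; rw [smul_zero]; exact N.zero_mem
      | add x y hx hy ihx ihy => intro c; rw [smul_add]; exact N.add_mem (ihx c) (ihy c)
      | smul c' x hx ih =>
        intro c
        rw [← mul_smul]
        exact ih (c * c')
    refine Module.finite_def.2 ⟨G', ?_⟩
    rw [eq_top_iff]
    intro a _
    have := main a (by rw [hG]; trivial) 1
    rwa [one_smul] at this
  · intro hfg
    obtain ⟨G, hG⟩ := Module.finite_def.1 hfg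
    refine Module.finite_def.2 ⟨G, ?_⟩
    have main : ∀ x : A, x ∈ Submodule.span (MonoidAlgebra ℤ T) (↑G : Set A) →
        x ∈ Submodule.span (MonoidAlgebra ℤ (WithOne U)) (↑G : Set A) := by
      intro x hx
      induction hx using Submodule.span_induction with
      | mem x hx => exact Submodule.subset_span hx
      | zero => exact (Submodule.span (MonoidAlgebra ℤ (WithOne U)) (↑G : Set A)).zero_mem
      | add x y hx hy ihx ihy => exact Submodule.add_mem _ ihx ihy
      | smul c x hx ih =>
        rw [hsmul]
        exact Submodule.smul_mem _ _ ih
    rw [eq_top_iff]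
    intro a _
    exact main a (by rw [hG]; trivial)
end

section
/- Let S be a monoid and let J be a left ideal of S. If J (i.e., the monoid J ∪ {1} obtained by adjoining an identity) is of type left-FP_1, then S is of type left-FP_1. -/
noncomputable def augHom (S : Type*) [Monoid S] : MonoidAlgebra ℤ S →+* ℤ :=
  (MonoidAlgebra.lift ℤ ℤ S 1).toRingHom

lemma augHom_single {S : Type*} [Monoid S] (s : S) (c : ℤ) :
    augHom S (MonoidAlgebra.single s c) = c := by
  simp [augHom]

section
variable (S : Type*) [Monoid S]

local notation "R" => MonoidAlgebra ℤ S

noncomputable def augLin : @LinearMap R R _ _ (RingHom.id R) R ℤ _ _ _ (augModule S) :=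
  @LinearMap.toSpanSingleton R ℤ _ _ (augModule S) 1

lemma augLin_apply (r : R) : augLin S r = augHom S r := mul_one (augHom S r)

lemma augLin_surj : Function.Surjective (augLin S) := by
  intro z
  exact ⟨MonoidAlgebra.single 1 z, by rw [augLin_apply, augHom_single]⟩

lemma fg_of_FP1 (h : LeftFP S 1) : (RingHom.ker (augHom S)).FG := by
  obtain ⟨k, d, ε, hs, h0, -⟩ := h
  haveI hfp : @Module.FinitePresentation R ℤ _ _ (augModule S) :=
    @Module.finitePresentation_of_surjective R (Fin (k 0) → R) ℤ _ _ _ _ (augModule S) _ ε hs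
      (by rw [← h0 one_pos, LinearMap.range_eq_map]
          exact (Module.Finite.fg_top : (⊤ : Submodule R (Fin (k 1) → R)).FG).map (d 0))
  have h2 := @Module.FinitePresentation.fg_ker R R ℤ _ _ _ _ (augModule S) _ hfp
    (augLin S) (augLin_surj S)
  obtain ⟨B, hB⟩ := h2
  refine ⟨B, hB.trans ?_⟩
  ext x
  simp [LinearMap.mem_ker, RingHom.mem_ker, augLin_apply]

lemma FP1_of_fg (h : (RingHom.ker (augHom S)).FG) : LeftFP S 1 := by
  obtain ⟨A, hA⟩ := h
  classical
  set n := A.card with hn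
  set g : Fin n → R := fun i => (A.equivFin.symm i : R) with hg
  have hrg : Set.range g = (A : Set R) := by
    have : g = Subtype.val ∘ A.equivFin.symm := rfl
    rw [this, Set.range_comp, Equiv.range_eq_univ, Set.image_univ]
    ext x; simp
  set e1 : (Fin 1 → R) ≃ₗ[R] R := LinearEquiv.funUnique (Fin 1) R R with he1
  set F : (Fin n → R) →ₗ[R] R :=
    (Finsupp.linearCombination R g) ∘ₗ
      (Finsupp.linearEquivFunOnFinite R R (Fin n)).symm.toLinearMap with hF
  have hrF : LinearMap.range F = Submodule.span R (Set.range g) := by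
    rw [hF, LinearMap.range_comp, LinearEquiv.range, Submodule.map_top,
      Finsupp.range_linearCombination]
  show @ModuleFP R _ ℤ _ (augModule S) 1
  refine ⟨fun i => match i with | 0 => 1 | _ + 1 => n,
    fun i => match i with
      | 0 => e1.symm.toLinearMap ∘ₗ F
      | _ + 1 => LinearMap.id,
    (augLin S) ∘ₗ e1.toLinearMap, ?_, ?_, by omega⟩
  · exact (augLin_surj S).comp e1.surjective
  · intro _
    show LinearMap.range (e1.symm.toLinearMap ∘ₗ F) = _
    rw [LinearMap.range_comp]
    ext x
    simp only [Submodule.mem_map, LinearMap.mem_range, LinearMap.mem_ker, LinearMap.coe_comp,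
      Function.comp_apply, augLin_apply]
    have hk : LinearMap.range F = RingHom.ker (augHom S) := by rw [hrF, hrg]; exact hA
    constructor
    · rintro ⟨y, ⟨z, rfl⟩, rfl⟩
      have hm : F z ∈ RingHom.ker (augHom S) := hk ▸ LinearMap.mem_range_self F z
      simpa using RingHom.mem_ker.mp hm
    · intro hx
      have hmem : e1 x ∈ LinearMap.range F := by rw [hk]; exact RingHom.mem_ker.mpr hx
      exact ⟨e1 x, LinearMap.mem_range.mp hmem, e1.symm_apply_apply x⟩
end

lemma mem_of_aug_zero {S : Type*} [Monoid S] (P : Ideal (MonoidAlgebra ℤ S))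
    (hP : ∀ s : S, MonoidAlgebra.single s 1 - 1 ∈ P)
    (x : MonoidAlgebra ℤ S) (hx : augHom S x = 0) : x ∈ P := by
  have hsm : ∀ (r : ℤ) (f : MonoidAlgebra ℤ S), r • f = MonoidAlgebra.single 1 r * f := by
    intro r f
    ext x
    rw [MonoidAlgebra.coeff_single_one_mul, MonoidAlgebra.coeff_smul_apply, smul_eq_mul]
  have key : ∀ y : MonoidAlgebra ℤ S, y - MonoidAlgebra.single 1 (augHom S y) ∈ P := by
    intro y
    induction y using MonoidAlgebra.induction_on with
    | of g =>
      have heq : MonoidAlgebra.of ℤ S g - MonoidAlgebra.single 1 (augHom S (MonoidAlgebra.of ℤ S g))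
          = MonoidAlgebra.single g 1 - 1 := by
        rw [MonoidAlgebra.of_apply, augHom_single, ← MonoidAlgebra.one_def]
      rw [heq]; exact hP g
    | add f g hf hg =>
      have heq : f + g - MonoidAlgebra.single 1 (augHom S (f + g))
          = (f - MonoidAlgebra.single 1 (augHom S f))
            + (g - MonoidAlgebra.single 1 (augHom S g)) := by
        rw [map_add, MonoidAlgebra.single_add]; abel
      rw [heq]; exact P.add_mem hf hg
    | smul r f hf =>
      have heq : r • f - MonoidAlgebra.single 1 (augHom S (r • f))
          = MonoidAlgebra.single 1 r * (f - MonoidAlgebra.single 1 (augHom S f)) := by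
        rw [hsm, mul_sub, map_mul, augHom_single, MonoidAlgebra.single_mul_single, one_mul]
      rw [heq]; exact P.mul_mem_left _ hf
  have := key x
  rw [hx] at this
  simpa using this

lemma ker_fg_transfer {S : Type*} [Monoid S] (J : Subsemigroup S) (j₀ : S) (hj₀ : j₀ ∈ J)
    (hJ : ∀ s : S, ∀ j ∈ J, s * j ∈ J)
    (h : (RingHom.ker (augHom (WithOne J))).FG) :
    (RingHom.ker (augHom S)).FG := by
  classical
  obtain ⟨A, hA⟩ := h
  set μ : WithOne J →* S := WithOne.lift (MulMemClass.subtype J) with hμ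
  set φ : MonoidAlgebra ℤ (WithOne J) →+* MonoidAlgebra ℤ S :=
    MonoidAlgebra.mapDomainRingHom ℤ μ with hφ
  have hφs : ∀ (t : WithOne J) (c : ℤ), φ (MonoidAlgebra.single t c)
      = MonoidAlgebra.single (μ t) c := by
    intro t c
    exact MonoidAlgebra.mapDomain_single
  have haug : ∀ y, augHom S (φ y) = augHom (WithOne J) y := by
    have : (augHom S).comp φ = augHom (WithOne J) := by
      apply MonoidAlgebra.ringHom_ext
      · intro b; simp [hφs, augHom_single]
      · intro a; simp [hφs, augHom_single]
    exact fun y => RingHom.congr_fun this y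
  refine ⟨insert (MonoidAlgebra.single j₀ 1 - 1) (A.image φ), le_antisymm ?_ ?_⟩
  · rw [Ideal.span_le]
    intro x hx
    simp only [Finset.coe_insert, Set.mem_insert_iff, Finset.coe_image, Set.mem_image] at hx
    rcases hx with rfl | ⟨a, ha, rfl⟩
    · simp only [SetLike.mem_coe, RingHom.mem_ker, map_sub, augHom_single, map_one, sub_self]
    · have hk : a ∈ RingHom.ker (augHom (WithOne J)) := hA ▸ Ideal.subset_span ha
      simp only [SetLike.mem_coe, RingHom.mem_ker, haug]
      exact RingHom.mem_ker.mp hk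
  · intro x hx
    apply mem_of_aug_zero _ ?_ x (RingHom.mem_ker.mp hx)
    intro s
    have hgen : (MonoidAlgebra.single j₀ 1 - 1 : MonoidAlgebra ℤ S)
        ∈ Ideal.span ((insert (MonoidAlgebra.single j₀ 1 - 1) (A.image φ) : Finset _) : Set _) :=
      Ideal.subset_span (by simp)
    have hJmem : ∀ j, j ∈ J → (MonoidAlgebra.single j 1 - 1 : MonoidAlgebra ℤ S)
        ∈ Ideal.span ((insert (MonoidAlgebra.single j₀ 1 - 1) (A.image φ) : Finset _) : Set _) := by
      intro j hj
      have ht : (MonoidAlgebra.single ((⟨j, hj⟩ : J) : WithOne J) 1 - 1)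
          ∈ RingHom.ker (augHom (WithOne J)) := by
        simp only [RingHom.mem_ker, map_sub, augHom_single, map_one, sub_self]
      rw [← hA] at ht
      have h2 := Ideal.mem_map_of_mem φ ht
      rw [Ideal.map_span] at h2
      have h3 : φ (MonoidAlgebra.single ((⟨j, hj⟩ : J) : WithOne J) 1 - 1)
          = MonoidAlgebra.single j 1 - 1 := by
        rw [map_sub, map_one, hφs, hμ, WithOne.lift_coe]
        rfl
      rw [h3] at h2
      refine Ideal.span_mono ?_ h2
      intro y hy
      rcases hy with ⟨a, ha, rfl⟩
      exact Finset.mem_coe.mpr (Finset.mem_insert.mpr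
        (Or.inr (Finset.mem_image_of_mem _ (Finset.mem_coe.mp ha))))
    have hsj : s * j₀ ∈ J := hJ s j₀ hj₀
    have heq : (MonoidAlgebra.single s 1 - 1 : MonoidAlgebra ℤ S)
        = (MonoidAlgebra.single (s * j₀) 1 - 1)
          - MonoidAlgebra.single s 1 * (MonoidAlgebra.single j₀ 1 - 1) := by
      rw [mul_sub, MonoidAlgebra.single_mul_single, mul_one, mul_one]
      abel
    rw [heq]
    exact Ideal.sub_mem _ (hJmem _ hsj) (Ideal.mul_mem_left _ _ hgen)

/-- Let `S` be a monoid and `J` a left ideal of `S`.  If `J` (that is,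
the monoid `J ∪ {1}` obtained by adjoining an identity) is of type left-`FP_1`, then `S`
is of type left-`FP_1`. -/
theorem stmt13 {S : Type*} [Monoid S] (J : Subsemigroup S)
    (hne : (J : Set S).Nonempty) (hJ : ∀ s : S, ∀ j ∈ J, s * j ∈ J)
    (h : SgLeftFP J 1) :
    LeftFP S 1 := by
  obtain ⟨j₀, hj₀⟩ := hne
  exact FP1_of_fg S (ker_fg_transfer J j₀ hj₀ hJ (fg_of_FP1 (WithOne J) h))
end
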